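/- arXiv:1506.02572 — 3 statements merged into one kernel-verified Lean document; each statement's English description precedes it below -/
import Mathlib

section
/- Let O be a convex polygon, let ω satisfy 0 < ω ≤ π/2, and let (q, d₁) be a valid ω-probe of O whose apex q lies on O. Then q is a vertex of O and the interior angle of O at q is at most ω; that is, q is a narrow vertex of O. -/
open Real EuclideanGeometry

noncomputable section

abbrev Plane := EuclideanSpace ℝ (Fin 2)

/-- Counterclockwise rotation of a vector of the plane by angle `θ`. -/
def rot (θ : ℝ) (d : Plane) : Plane :=
  (WithLp.equiv 2 (Fin 2 → ℝ)).symm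
    ![Real.cos θ * d 0 - Real.sin θ * d 1, Real.sin θ * d 0 + Real.cos θ * d 1]

/-- A convex polygon: the convex hull of at least 3 points in strictly convex position;
the points are the vertices. -/
structure ConvexPolygon where
  verts : Finset Plane
  three_le_card : 3 ≤ verts.card
  strictConvexPos : ∀ v ∈ verts, v ∉ convexHull ℝ ((verts : Set Plane) \ {v})

/-- The polygon as a subset of the plane. -/
def ConvexPolygon.body (O : ConvexPolygon) : Set Plane :=
  convexHull ℝ (O.verts : Set Plane)

/-- `x` and `y` are adjacent vertices of `O` (the segment joining them is an edge of `O`). -/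
def ConvexPolygon.Adj (O : ConvexPolygon) (x y : Plane) : Prop :=
  x ∈ O.verts ∧ y ∈ O.verts ∧ x ≠ y ∧ segment ℝ x y ⊆ frontier O.body

/-- The interior angle of `O` at a vertex `v`: the angle `∠ u v w` where `u` and `w` are
the two vertices adjacent to `v`. -/
def ConvexPolygon.intAngle (O : ConvexPolygon) (v : Plane) : ℝ :=
  sSup {θ | ∃ u w, O.Adj v u ∧ O.Adj v w ∧ u ≠ w ∧ θ = ∠ u v w}

/-- A narrow vertex: a vertex whose interior angle is at most `ω`. -/
def ConvexPolygon.IsNarrow (O : ConvexPolygon) (ω : ℝ) (v : Plane) : Prop :=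
  v ∈ O.verts ∧ O.intAngle v ≤ ω

/-- `O` is a rectangle: exactly 4 vertices, all interior angles `π/2`. -/
def ConvexPolygon.IsRectangle (O : ConvexPolygon) : Prop :=
  O.verts.card = 4 ∧ ∀ v ∈ O.verts, O.intAngle v = Real.pi / 2

/-- The `ω`-wedge with apex `q` and first arm direction `d`. -/
def wedge (ω : ℝ) (q d : Plane) : Set Plane :=
  {x | ∃ s t : ℝ, 0 ≤ s ∧ 0 ≤ t ∧ x = q + s • d + t • rot ω d}

/-- The first arm of a wedge: the ray from `q` in direction `d`. -/
def arm1 (q d : Plane) : Set Plane := {x | ∃ t : ℝ, 0 ≤ t ∧ x = q + t • d}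

/-- The second arm of an `ω`-wedge: the ray from `q` in direction `rot ω d`. -/
def arm2 (ω : ℝ) (q d : Plane) : Set Plane := arm1 q (rot ω d)

/-- `(q, d)` is a valid `ω`-probe of `O`: a wedge with unit arm direction containing `O`,
each of whose arms meets `O`. -/
def IsValidProbe (ω : ℝ) (O : ConvexPolygon) (q d : Plane) : Prop :=
  ‖d‖ = 1 ∧ O.body ⊆ wedge ω q d ∧
    (arm1 q d ∩ O.body).Nonempty ∧ (arm2 ω q d ∩ O.body).Nonempty

/-- A directed line: a point together with a unit direction. -/
structure DirLine where
  pt : Plane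
  dir : Plane
  norm_dir : ‖dir‖ = 1

/-- Membership of a point in a directed line. -/
def DirLine.mem (L : DirLine) (x : Plane) : Prop := ∃ t : ℝ, x = L.pt + t • L.dir

/-- A valid `ω`-probe of `O` along the directed line `L`. -/
def IsValidProbeAlong (ω : ℝ) (O : ConvexPolygon) (L : DirLine) (q d : Plane) : Prop :=
  IsValidProbe ω O q d ∧ L.mem q ∧ ∃ t : ℝ, 0 ≤ t ∧ q + t • L.dir ∈ O.body

/-- `p` is the point of `A` closest to `q`. -/
def ClosestOn (q : Plane) (A : Set Plane) (p : Plane) : Prop :=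
  p ∈ A ∧ ∀ x ∈ A, dist q p ≤ dist q x


open scoped RealInnerProductSpace in
lemma inner_two (x y : Plane) : ⟪x, y⟫ = x 0 * y 0 + x 1 * y 1 := by
  simp [PiLp.inner_apply, Fin.sum_univ_two]
  ring

lemma rot_apply0 (θ : ℝ) (d : Plane) : rot θ d 0 = Real.cos θ * d 0 - Real.sin θ * d 1 := by
  simp [rot]

lemma rot_apply1 (θ : ℝ) (d : Plane) : rot θ d 1 = Real.sin θ * d 0 + Real.cos θ * d 1 := by
  simp [rot]

open scoped RealInnerProductSpace in
lemma cone_inner (ω : ℝ) (d : Plane) (hd : ‖d‖ = 1) (s t s' t' : ℝ) :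
    ⟪s • d + t • rot ω d, s' • d + t' • rot ω d⟫
      = s * s' + t * t' + Real.cos ω * (s * t' + s' * t) := by
  have hdd : d 0 * d 0 + d 1 * d 1 = 1 := by
    have h1 : ⟪d, d⟫ = ‖d‖ ^ 2 := real_inner_self_eq_norm_sq d
    rw [inner_two, hd] at h1; linarith [h1]
  have h1 : ⟪d, d⟫ = 1 := by rw [inner_two]; linarith
  have h2 : ⟪d, rot ω d⟫ = Real.cos ω := by
    rw [inner_two, rot_apply0, rot_apply1]
    linear_combination Real.cos ω * hdd
  have h2' : ⟪rot ω d, d⟫ = Real.cos ω := by rw [real_inner_comm]; exact h2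
  have h3 : ⟪rot ω d, rot ω d⟫ = 1 := by
    rw [inner_two, rot_apply0, rot_apply1]
    have hsc : Real.sin ω ^ 2 + Real.cos ω ^ 2 = 1 := Real.sin_sq_add_cos_sq ω
    nlinarith [hdd, hsc]
  simp only [inner_add_left, inner_add_right, real_inner_smul_left, real_inner_smul_right,
    h1, h2, h2', h3]
  ring

open scoped RealInnerProductSpace in
lemma cone_norm_sq (ω : ℝ) (d : Plane) (hd : ‖d‖ = 1) (s t : ℝ) :
    ‖s • d + t • rot ω d‖ ^ 2 = s ^ 2 + t ^ 2 + 2 * Real.cos ω * s * t := by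
  have h := real_inner_self_eq_norm_sq (s • d + t • rot ω d)
  rw [cone_inner ω d hd s t s t] at h
  linarith [h]

set_option maxHeartbeats 1000000 in
open scoped RealInnerProductSpace in
/-- if the apex of a valid `ω`-probe of `O` lies on `O`, then it is a narrow
vertex of `O`. -/
theorem apex_on_polygon_is_narrow (ω : ℝ) (hω₀ : 0 < ω) (hω : ω ≤ Real.pi / 2)
    (O : ConvexPolygon) (q d : Plane) (h : IsValidProbe ω O q d) (hq : q ∈ O.body) :
    O.IsNarrow ω q := by
  obtain ⟨hd, hsub, -, -⟩ := h
  have hπ := Real.pi_pos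
  set c := Real.cos ω with hc
  have hc0 : 0 ≤ c := Real.cos_nonneg_of_mem_Icc ⟨by linarith, hω⟩
  have hc1 : c ≤ 1 := Real.cos_le_one ω
  -- every point of the body decomposes over the cone at q
  have hdec : ∀ x ∈ O.body, ∃ s t : ℝ, 0 ≤ s ∧ 0 ≤ t ∧ x - q = s • d + t • rot ω d := by
    intro x hx
    obtain ⟨s, t, hs, ht, hx'⟩ := hsub hx
    exact ⟨s, t, hs, ht, by rw [hx']; abel⟩
  -- strict positivity of the linear functional ⟪d + rot ω d, · - q⟫ on body \ {q}
  have hpos : ∀ x ∈ O.body, x ≠ q → 0 < ⟪d + rot ω d, x - q⟫ := by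
    intro x hx hxq
    obtain ⟨s, t, hs, ht, hxd⟩ := hdec x hx
    have h1 : ⟪d + rot ω d, x - q⟫ = (s + t) * (1 + c) := by
      rw [hxd]
      have h2 := cone_inner ω d hd 1 1 s t
      simp only [one_smul] at h2
      rw [h2]; ring
    have hst : 0 < s + t := by
      rcases lt_or_eq_of_le (by linarith : (0 : ℝ) ≤ s + t) with h' | h'
      · exact h'
      · exfalso
        apply hxq
        have hs0 : s = 0 := by linarith
        have ht0 : t = 0 := by linarith
        have : x - q = 0 := by rw [hxd, hs0, ht0]; simp
        exact sub_eq_zero.mp this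
    rw [h1]; nlinarith
  -- q is a vertex
  have hqv : q ∈ O.verts := by
    by_contra hqv
    have hlin : IsLinearMap ℝ (fun x : Plane => ⟪d + rot ω d, x⟫) :=
      ⟨fun a b => inner_add_right _ _ _, fun r a => by
        simp only [real_inner_smul_right, smul_eq_mul]⟩
    have hsub2 : O.body ⊆ {x : Plane | ⟪d + rot ω d, q⟫ < ⟪d + rot ω d, x⟫} := by
      apply convexHull_min _ (convex_halfSpace_gt hlin _)
      intro v hv
      have hvq : v ≠ q := fun h' => hqv (h' ▸ hv)
      have h3 := hpos v (subset_convexHull ℝ _ hv) hvq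
      rw [inner_sub_right] at h3
      exact lt_of_sub_pos h3
    have h4 : (⟪d + rot ω d, q⟫ : ℝ) < ⟪d + rot ω d, q⟫ := hsub2 hq
    exact lt_irrefl _ h4
  refine ⟨hqv, ?_⟩
  apply Real.sSup_le _ hω₀.le
  rintro θ ⟨u, w, ⟨-, hu, hqu, -⟩, ⟨-, hw, hqw, -⟩, -, rfl⟩
  obtain ⟨s1, t1, hs1, ht1, hu'⟩ := hdec u (subset_convexHull ℝ _ hu)
  obtain ⟨s2, t2, hs2, ht2, hw'⟩ := hdec w (subset_convexHull ℝ _ hw)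
  have hune : u - q ≠ 0 := sub_ne_zero.mpr (Ne.symm hqu)
  have hwne : w - q ≠ 0 := sub_ne_zero.mpr (Ne.symm hqw)
  have hN1 : 0 < ‖u - q‖ := norm_pos_iff.mpr hune
  have hN2 : 0 < ‖w - q‖ := norm_pos_iff.mpr hwne
  have hP : ⟪u - q, w - q⟫ = s1 * s2 + t1 * t2 + c * (s1 * t2 + s2 * t1) := by
    rw [hu', hw', cone_inner ω d hd s1 t1 s2 t2]
  have hNa : ‖u - q‖ ^ 2 = s1 ^ 2 + t1 ^ 2 + 2 * c * s1 * t1 := by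
    rw [hu', cone_norm_sq ω d hd s1 t1]
  have hNb : ‖w - q‖ ^ 2 = s2 ^ 2 + t2 ^ 2 + 2 * c * s2 * t2 := by
    rw [hw', cone_norm_sq ω d hd s2 t2]
  have hPnn : 0 ≤ ⟪u - q, w - q⟫ := by rw [hP]; positivity
  have h1c : 0 ≤ 1 - c ^ 2 := by nlinarith
  have hiden : ⟪u - q, w - q⟫ ^ 2 - c ^ 2 * (‖u - q‖ ^ 2 * ‖w - q‖ ^ 2)
      = (1 - c ^ 2) * (s1 ^ 2 * s2 ^ 2 + t1 ^ 2 * t2 ^ 2)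
        + 2 * (s1 * t1 * s2 * t2) * (1 + c ^ 2 - 2 * c ^ 4)
        + 2 * c * (1 - c ^ 2) *
          (s1 ^ 2 * s2 * t2 + s1 * t1 * s2 ^ 2 + s1 * t1 * t2 ^ 2 + t1 ^ 2 * s2 * t2) := by
    rw [hP, hNa, hNb]; ring
  have e1 : 0 ≤ (1 - c ^ 2) * (s1 ^ 2 * s2 ^ 2 + t1 ^ 2 * t2 ^ 2) :=
    mul_nonneg h1c (by positivity)
  have e2 : 0 ≤ 2 * (s1 * t1 * s2 * t2) * (1 + c ^ 2 - 2 * c ^ 4) :=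
    mul_nonneg (by positivity) (by nlinarith)
  have e3 : 0 ≤ 2 * c * (1 - c ^ 2) *
      (s1 ^ 2 * s2 * t2 + s1 * t1 * s2 ^ 2 + s1 * t1 * t2 ^ 2 + t1 ^ 2 * s2 * t2) :=
    mul_nonneg (mul_nonneg (by positivity) h1c) (by positivity)
  have hkey : (c * (‖u - q‖ * ‖w - q‖)) ^ 2 ≤ ⟪u - q, w - q⟫ ^ 2 := by
    have hr : (c * (‖u - q‖ * ‖w - q‖)) ^ 2 = c ^ 2 * (‖u - q‖ ^ 2 * ‖w - q‖ ^ 2) := by ring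
    rw [hr]; linarith
  have hfin : c * (‖u - q‖ * ‖w - q‖) ≤ ⟪u - q, w - q⟫ :=
    (pow_le_pow_iff_left₀ (mul_nonneg hc0 (mul_nonneg hN1.le hN2.le)) hPnn two_ne_zero).mp hkey
  -- conclude the angle bound
  show EuclideanGeometry.angle u q w ≤ ω
  have hωπ : ω ≤ Real.pi := by linarith
  rw [EuclideanGeometry.angle, InnerProductGeometry.angle]
  rw [show ω = Real.arccos (Real.cos ω) from (Real.arccos_cos hω₀.le hωπ).symm]
  have hdiv : Real.cos ω ≤ ⟪u -ᵥ q, w -ᵥ q⟫ / (‖u -ᵥ q‖ * ‖w -ᵥ q‖) := by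
    rw [le_div_iff₀ (by simp [vsub_eq_sub]; positivity)]
    simpa [vsub_eq_sub, mul_comm, mul_assoc, mul_left_comm] using hfin
  have hanti : ∀ a b : ℝ, a ≤ b → Real.arccos b ≤ Real.arccos a := by
    intro a b hab
    simp only [Real.arccos_eq_pi_div_two_sub_arcsin]
    have := Real.monotone_arcsin hab
    linarith
  exact hanti _ _ hdiv

end
end

section
/- Let O be a convex polygon, let ω satisfy 0 < ω ≤ π/2, and let v be a vertex of O whose interior angle equals ω exactly. Then there is exactly one ω-wedge with apex v that contains O, namely the one whose two arms contain the two edges of O incident to v. -/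
open Real EuclideanGeometry

noncomputable section

lemma padd_apply (x y : Plane) (i : Fin 2) : (x + y) i = x i + y i := rfl
lemma psmul_apply (c : ℝ) (x : Plane) (i : Fin 2) : (c • x) i = c * x i := rfl
lemma psub_apply (x y : Plane) (i : Fin 2) : (x - y) i = x i - y i := rfl

lemma plane_ext {x y : Plane} (h0 : x 0 = y 0) (h1 : x 1 = y 1) : x = y := by
  ext i; fin_cases i <;> assumption

lemma norm_sq_coords (x : Plane) : ‖x‖^2 = x 0 ^ 2 + x 1 ^ 2 := by
  rw [EuclideanSpace.norm_eq, Real.sq_sqrt (by positivity)]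
  simp [Fin.sum_univ_two, sq_abs]

lemma inner_coords (x y : Plane) : (inner ℝ x y : ℝ) = x 0 * y 0 + x 1 * y 1 := by
  simp [PiLp.inner_apply, Fin.sum_univ_two, mul_comm]

/-- 2D cross product. -/
def cross (a b : Plane) : ℝ := a 0 * b 1 - a 1 * b 0

lemma cross_skew (a b : Plane) : cross a b = - cross b a := by simp [cross]; ring

lemma cross_rot_self (θ : ℝ) (a : Plane) : cross a (rot θ a) = Real.sin θ * ‖a‖^2 := by
  rw [norm_sq_coords]; simp only [cross, rot_apply0, rot_apply1]; ring

/-- Cramer decomposition. -/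
lemma decomp (d e y : Plane) (h : cross d e ≠ 0) :
    y = (cross y e / cross d e) • d + (cross d y / cross d e) • e := by
  have key0 : (cross y e / cross d e) * d 0 + (cross d y / cross d e) * e 0 = y 0 := by
    rw [div_mul_eq_mul_div, div_mul_eq_mul_div, ← add_div, div_eq_iff h]
    simp only [cross]; ring
  have key1 : (cross y e / cross d e) * d 1 + (cross d y / cross d e) * e 1 = y 1 := by
    rw [div_mul_eq_mul_div, div_mul_eq_mul_div, ← add_div, div_eq_iff h]
    simp only [cross]; ring
  exact plane_ext (by rw [padd_apply, psmul_apply, psmul_apply, key0])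
    (by rw [padd_apply, psmul_apply, psmul_apply, key1])

/-- A linear functional (given by coefficients) vanishing on a nonzero vector `e`
is a multiple of `cross · e`. -/
lemma functional_eq_cross (p q : ℝ) (e : Plane) (he : e ≠ 0) (h : p * e 0 + q * e 1 = 0) :
    ∃ β : ℝ, ∀ y : Plane, p * y 0 + q * y 1 = β * cross y e := by
  have hne : e 0 ^ 2 + e 1 ^ 2 ≠ 0 := by
    intro h0
    have h00 : e 0 ^ 2 = 0 := by nlinarith [sq_nonneg (e 0), sq_nonneg (e 1)]
    have h11 : e 1 ^ 2 = 0 := by nlinarith [sq_nonneg (e 0), sq_nonneg (e 1)]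
    exact he (plane_ext (by simpa using pow_eq_zero_iff (n := 2) (by norm_num) |>.mp h00)
      (by simpa using pow_eq_zero_iff (n := 2) (by norm_num) |>.mp h11))
  refine ⟨(p * e 1 - q * e 0)/(e 0 ^2 + e 1 ^2), fun y => ?_⟩
  rw [div_mul_eq_mul_div, eq_div_iff hne]
  simp only [cross]
  linear_combination (y 0 * e 0 + y 1 * e 1) * h

/-- two unit vectors at angle ω: one is rot ±ω of the other -/
lemma rot_of_angle {a b : Plane} (ω : ℝ) (hω₀ : 0 < ω) (hωπ : ω ≤ Real.pi/2)
    (ha : ‖a‖ = 1) (hb : ‖b‖ = 1) (hab : (inner ℝ a b : ℝ) = Real.cos ω) :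
    b = rot ω a ∨ a = rot ω b := by
  have ha2 : a 0 ^2 + a 1^2 = 1 := by rw [← norm_sq_coords, ha]; norm_num
  have hb2 : b 0 ^2 + b 1^2 = 1 := by rw [← norm_sq_coords, hb]; norm_num
  have hi : a 0 * b 0 + a 1 * b 1 = Real.cos ω := by rw [← inner_coords, hab]
  have hs : Real.sin ω ≥ 0 := Real.sin_nonneg_of_nonneg_of_le_pi hω₀.le
    (hωπ.trans (by linarith [Real.pi_pos]))
  have hcross : cross a b ^ 2 = Real.sin ω ^ 2 := by
    have hpy := Real.sin_sq_add_cos_sq ω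
    simp only [cross]
    linear_combination (b 0^2 + b 1^2) * ha2 + hb2 - (a 0*b 0 + a 1*b 1 + Real.cos ω) * hi - hpy
  rcases sq_eq_sq_iff_eq_or_eq_neg.mp hcross with h | h
  · left
    simp only [cross] at h
    apply plane_ext <;> simp only [rot_apply0, rot_apply1]
    · linear_combination a 0 * hi - a 1 * h - b 0 * ha2
    · linear_combination a 1 * hi + a 0 * h - b 1 * ha2
  · right
    have h' : b 0 * a 1 - b 1 * a 0 = Real.sin ω := by simp only [cross] at h; linarith
    apply plane_ext <;> simp only [rot_apply0, rot_apply1]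
    · linear_combination b 0 * hi - b 1 * h' - a 0 * hb2
    · linear_combination b 1 * hi + b 0 * h' - a 1 * hb2

/-! ### Polygon facts -/

lemma mid_mem_segment {p : Plane} {dv : Plane} {ta tb tc : ℝ}
    (hab : ta < tb) (hbc : tb < tc) :
    (tb • dv + p) ∈ segment ℝ (ta • dv + p) (tc • dv + p) := by
  have h : tc - ta ≠ 0 := by linarith
  refine ⟨(tc - tb)/(tc - ta), (tb - ta)/(tc - ta),
    div_nonneg (by linarith) (by linarith), div_nonneg (by linarith) (by linarith),
    by field_simp; ring, ?_⟩
  match_scalars <;> field_simp <;> ring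

lemma not_collinear_verts (O : ConvexPolygon) : ¬ Collinear ℝ (O.verts : Set Plane) := by
  classical
  intro hcol
  obtain ⟨a, ha, b, hb, hab⟩ := Finset.one_lt_card.mp
    (by have := O.three_le_card; omega : 1 < O.verts.card)
  obtain ⟨c, hc, hca, hcb⟩ : ∃ c ∈ O.verts, c ≠ a ∧ c ≠ b := by
    by_contra hcon
    push_neg at hcon
    have hsub : O.verts ⊆ {a, b} := fun x hx => by
      rcases eq_or_ne x a with rfl | hxa
      · simp
      · rcases eq_or_ne x b with rfl | hxb
        · simp
        · exact absurd hxb (by simpa using (hcon x hx hxa))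
    have h1 := Finset.card_le_card hsub
    have h2 : ({a, b} : Finset Plane).card ≤ 2 := Finset.card_insert_le _ _ |>.trans (by simp)
    have := O.three_le_card
    omega
  obtain ⟨dv, hdv⟩ := (collinear_iff_of_mem ha).mp hcol
  obtain ⟨ra, hra⟩ := hdv a ha
  obtain ⟨rb, hrb⟩ := hdv b hb
  obtain ⟨rc, hrc⟩ := hdv c hc
  rw [vadd_eq_add] at hra hrb hrc
  have key : ∀ x y z : Plane, x ∈ O.verts → y ∈ O.verts → z ∈ O.verts →
      y ≠ x → y ≠ z → ∀ tx ty tz : ℝ, tx < ty → ty < tz →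
      x = tx • dv + a → y = ty • dv + a → z = tz • dv + a → False := by
    intro x y z hx hy hz hyx hyz tx ty tz h1 h2 ex ey ez
    apply O.strictConvexPos y hy
    have hseg : y ∈ segment ℝ x z := by rw [ex, ey, ez]; exact mid_mem_segment h1 h2
    have hsub : segment ℝ x z ⊆ convexHull ℝ ((O.verts : Set Plane) \ {y}) := by
      apply (convex_convexHull ℝ _).segment_subset <;> apply subset_convexHull
      · exact ⟨hx, by simpa using hyx.symm⟩
      · exact ⟨hz, by simpa using hyz.symm⟩
    exact hsub hseg
  have hne : ra ≠ rb := fun h => hab (by rw [hra, hrb, h])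
  have hne2 : ra ≠ rc := fun h => hca (by rw [hra, hrc, h])
  have hne3 : rb ≠ rc := fun h => hcb (by rw [hrb, hrc, h])
  rcases lt_trichotomy ra rb with h1 | h1 | h1
  · rcases lt_trichotomy rb rc with h2 | h2 | h2
    · exact key a b c ha hb hc hab.symm hcb.symm ra rb rc h1 h2 hra hrb hrc
    · exact absurd h2 hne3
    · rcases lt_trichotomy ra rc with h3 | h3 | h3
      · exact key a c b ha hc hb hca hcb ra rc rb h3 h2 hra hrc hrb
      · exact absurd h3 hne2
      · exact key c a b hc ha hb hca.symm hab rc ra rb h3 h1 hrc hra hrb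
  · exact absurd h1 hne
  · rcases lt_trichotomy ra rc with h2 | h2 | h2
    · exact key b a c hb ha hc hab hca.symm rb ra rc h1 h2 hrb hra hrc
    · exact absurd h2 hne2
    · rcases lt_trichotomy rb rc with h3 | h3 | h3
      · exact key b c a hb hc ha hcb hca rb rc ra h3 h2 hrb hrc hra
      · exact absurd h3 hne3
      · exact key c b a hc hb ha hcb.symm hab.symm rc rb ra h3 h1 hrc hrb hra

lemma interior_body_nonempty (O : ConvexPolygon) : (interior O.body).Nonempty := by
  rw [ConvexPolygon.body,
    Convex.interior_nonempty_iff_affineSpan_eq_top (convex_convexHull ℝ _),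
    affineSpan_convexHull]
  by_contra h
  apply not_collinear_verts O
  have hne : (O.verts : Set Plane).Nonempty := by
    have := O.three_le_card
    exact Finset.coe_nonempty.mpr (Finset.card_pos.mp (by omega))
  have hd : vectorSpan ℝ (O.verts : Set Plane) ≠ ⊤ := by
    rw [← direction_affineSpan]
    exact fun ht => h ((AffineSubspace.direction_eq_top_iff_of_nonempty
      ((affineSpan_nonempty (k := ℝ)).mpr hne)).mp ht)
  rw [collinear_iff_finrank_le_one]
  by_contra hr
  push_neg at hr
  apply hd
  apply Submodule.eq_top_of_finrank_eq
  have hle : Module.finrank ℝ (vectorSpan ℝ (O.verts : Set Plane)) ≤ 2 := by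
    simpa using Submodule.finrank_le (vectorSpan ℝ (O.verts : Set Plane))
  have : Module.finrank ℝ Plane = 2 := by simp
  omega

/-- support line at an edge -/
lemma edge_support (O : ConvexPolygon) {v u : Plane} (h : O.Adj v u) :
    ∃ p q : ℝ, (∀ x ∈ O.body, p * x 0 + q * x 1 ≤ p * v 0 + q * v 1) ∧
      (p * u 0 + q * u 1 = p * v 0 + q * v 1) ∧
      ∃ z ∈ O.body, p * z 0 + q * z 1 < p * v 0 + q * v 1 := by
  obtain ⟨hv, hu, hvu, hseg⟩ := h
  have hbconv : Convex ℝ O.body := convex_convexHull ℝ _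
  set m := midpoint ℝ v u with hm
  have hmf : m ∈ frontier O.body := hseg (midpoint_mem_segment v u)
  have hmi : m ∉ interior O.body := hmf.2
  obtain ⟨f, hf⟩ := geometric_hahn_banach_open_point (hbconv.interior) isOpen_interior hmi
  obtain ⟨a, hai⟩ := interior_body_nonempty O
  have hle : ∀ x ∈ O.body, f x ≤ f m := by
    intro x hx
    by_contra hgt
    push_neg at hgt
    have hfa : f a < f m := hf a hai
    have hxa : f a < f x := lt_trans hfa hgt
    set t : ℝ := (f x - f m) / (2 * (f x - f a)) with ht
    have ht0 : 0 < t := by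
      apply div_pos <;> linarith
    have ht1 : t ≤ 1 := by
      rw [div_le_one (by linarith)]; linarith
    have hmem : x + t • (a - x) ∈ interior O.body :=
      hbconv.add_smul_sub_mem_interior hx hai ⟨ht0, ht1⟩
    have hlt := hf _ hmem
    rw [map_add, map_smul, map_sub] at hlt
    simp only [smul_eq_mul] at hlt
    have h2 : f x - f a ≠ 0 := by linarith
    have key : t * (f a - f x) = (f m - f x)/2 := by
      rw [ht]; field_simp; ring
    rw [key] at hlt
    linarith
  have hfv : f v ≤ f m := hle v (subset_convexHull ℝ _ hv)
  have hfu : f u ≤ f m := hle u (subset_convexHull ℝ _ hu)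
  have hmid : f m = (f v + f u) / 2 := by
    rw [hm, midpoint_eq_smul_add, map_smul]
    rw [map_add]
    simp only [smul_eq_mul]
    simp [invOf_eq_inv]
    ring
  have hfveq : f v = f m := by linarith
  have hfueq : f u = f m := by linarith
  set E0 : Plane := EuclideanSpace.single 0 (1:ℝ) with hE0
  set E1 : Plane := EuclideanSpace.single 1 (1:ℝ) with hE1
  have hcoord : ∀ y : Plane, f y = f E0 * y 0 + f E1 * y 1 := by
    intro y
    have hy : y = y 0 • E0 + y 1 • E1 := by
      ext i
      fin_cases i <;> simp [hE0, hE1, EuclideanSpace.single_apply]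
    conv_lhs => rw [hy]
    rw [map_add, map_smul, map_smul]
    simp [mul_comm]
  refine ⟨f E0, f E1, fun x hx => ?_, ?_, ?_⟩
  · rw [← hcoord, ← hcoord]
    calc f x ≤ f m := hle x hx
    _ = f v := hfveq.symm
  · rw [← hcoord, ← hcoord, hfueq, hfveq]
  · refine ⟨a, interior_subset hai, ?_⟩
    rw [← hcoord, ← hcoord]
    calc f a < f m := hf a hai
    _ = f v := hfveq.symm
lemma pzero_apply (i : Fin 2) : (0 : Plane) i = 0 := rfl

lemma cross_smul_left (c : ℝ) (x y : Plane) : cross (c • x) y = c * cross x y := by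
  simp only [cross, psmul_apply]; ring

lemma cross_smul_right (c : ℝ) (x y : Plane) : cross x (c • y) = c * cross x y := by
  simp only [cross, psmul_apply]; ring

lemma body_subset_wedge (ω : ℝ) (hω₀ : 0 < ω) (hωπ : ω < Real.pi)
    (O : ConvexPolygon) (v u w : Plane) (hu : O.Adj v u) (hw : O.Adj v w)
    (hor : ‖w - v‖⁻¹ • (w - v) = rot ω (‖u - v‖⁻¹ • (u - v))) :
    O.body ⊆ wedge ω v (‖u - v‖⁻¹ • (u - v)) := by
  have hsin : 0 < Real.sin ω := Real.sin_pos_of_pos_of_lt_pi hω₀ hωπ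
  have huv : u - v ≠ 0 := sub_ne_zero_of_ne (hu.2.2.1).symm
  have hwv : w - v ≠ 0 := sub_ne_zero_of_ne (hw.2.2.1).symm
  set a : Plane := ‖u - v‖⁻¹ • (u - v) with hadef
  set b : Plane := rot ω a with hbdef
  have hna : ‖a‖ = 1 := norm_smul_inv_norm huv
  have hΔ : cross a b = Real.sin ω := by rw [hbdef, cross_rot_self, hna]; norm_num
  have hΔpos : 0 < cross a b := hΔ ▸ hsin
  have hane : a ≠ 0 := fun h => by rw [h] at hna; simp at hna
  have hbne : b ≠ 0 := fun h => by
    rw [h] at hΔpos; simp only [cross, pzero_apply] at hΔpos; linarith [hΔpos]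
  have hup : u - v = ‖u - v‖ • a := by
    rw [hadef, smul_inv_smul₀ (norm_ne_zero_iff.mpr huv)]
  have hwp : w - v = ‖w - v‖ • b := by
    rw [← hor, smul_inv_smul₀ (norm_ne_zero_iff.mpr hwv)]
  have hnuv : 0 < ‖u - v‖ := norm_pos_iff.mpr huv
  have hnwv : 0 < ‖w - v‖ := norm_pos_iff.mpr hwv
  -- t-coordinate sign
  have hcross_a : ∀ x ∈ O.body, 0 ≤ cross a (x - v) := by
    obtain ⟨p, q, hple, hpeq, z, hz, hzlt⟩ := edge_support O hu
    have hva : p * a 0 + q * a 1 = 0 := by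
      have h2 : p * (u - v) 0 + q * (u - v) 1 = 0 := by
        rw [psub_apply, psub_apply]; linarith [hpeq]
      have ha0 : a 0 = ‖u - v‖⁻¹ * (u - v) 0 := by rw [hadef]; rfl
      have ha1 : a 1 = ‖u - v‖⁻¹ * (u - v) 1 := by rw [hadef]; rfl
      rw [ha0, ha1]
      linear_combination ‖u - v‖⁻¹ * h2
    obtain ⟨β, hβ⟩ := functional_eq_cross p q a hane hva
    have hgen : ∀ x ∈ O.body, β * cross (x - v) a ≤ 0 := by
      intro x hx
      have h1 := hple x hx
      have h2 := hβ (x - v)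
      rw [psub_apply, psub_apply] at h2
      linarith
    have hβ0 : 0 ≤ β := by
      have h1 := hgen w (subset_convexHull ℝ _ hw.2.1)
      rw [hwp, cross_smul_left, cross_skew b a] at h1
      nlinarith [mul_pos hnwv hΔpos]
    have hβpos : 0 < β := by
      rcases hβ0.lt_or_eq with h | h
      · exact h
      · exfalso
        have h2 := hβ (z - v)
        rw [psub_apply, psub_apply, ← h] at h2
        simp at h2
        linarith
    intro x hx
    have h1 := hgen x hx
    rw [cross_skew] at h1
    nlinarith
  -- s-coordinate sign
  have hcross_b : ∀ x ∈ O.body, 0 ≤ cross (x - v) b := by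
    obtain ⟨p, q, hple, hpeq, z, hz, hzlt⟩ := edge_support O hw
    have hvb : p * b 0 + q * b 1 = 0 := by
      have h2 : p * (w - v) 0 + q * (w - v) 1 = 0 := by
        rw [psub_apply, psub_apply]; linarith [hpeq]
      have hb0 : (w - v) 0 = ‖w - v‖ * b 0 := by conv_lhs => rw [hwp, psmul_apply]
      have hb1 : (w - v) 1 = ‖w - v‖ * b 1 := by conv_lhs => rw [hwp, psmul_apply]
      rw [hb0, hb1] at h2
      have h3 : ‖w - v‖ * (p * b 0 + q * b 1) = 0 := by linear_combination h2
      exact (mul_eq_zero.mp h3).resolve_left hnwv.ne'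
    obtain ⟨β, hβ⟩ := functional_eq_cross p q b hbne hvb
    have hgen : ∀ x ∈ O.body, β * cross (x - v) b ≤ 0 := by
      intro x hx
      have h1 := hple x hx
      have h2 := hβ (x - v)
      rw [psub_apply, psub_apply] at h2
      linarith
    have hβ0 : β ≤ 0 := by
      have h1 := hgen u (subset_convexHull ℝ _ hu.2.1)
      rw [hup, cross_smul_left] at h1
      nlinarith [mul_pos hnuv hΔpos]
    have hβneg : β < 0 := by
      rcases hβ0.lt_or_eq with h | h
      · exact h
      · exfalso
        have h2 := hβ (z - v)
        rw [psub_apply, psub_apply, h] at h2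
        simp at h2
        linarith
    intro x hx
    have h1 := hgen x hx
    nlinarith
  intro x hx
  refine ⟨cross (x - v) b / cross a b, cross a (x - v) / cross a b,
    div_nonneg (hcross_b x hx) hΔpos.le, div_nonneg (hcross_a x hx) hΔpos.le, ?_⟩
  rw [← hbdef, add_assoc, ← decomp a b (x - v) hΔpos.ne']
  abel
lemma cone_extreme {c s₁ t₁ s₂ t₂ : ℝ} (hc : 0 ≤ c) (hs₁ : 0 ≤ s₁) (ht₁ : 0 ≤ t₁)
    (hs₂ : 0 ≤ s₂) (ht₂ : 0 ≤ t₂)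
    (h1 : s₁^2 + t₁^2 + 2*s₁*t₁*c = 1) (h2 : s₂^2 + t₂^2 + 2*s₂*t₂*c = 1)
    (h4 : s₁*t₂ - t₁*s₂ = 1) : s₁ = 1 ∧ t₁ = 0 := by
  have hs₁le : s₁ ≤ 1 := by nlinarith [mul_nonneg (mul_nonneg hs₁ ht₁) hc, sq_nonneg t₁]
  have ht₂le : t₂ ≤ 1 := by nlinarith [mul_nonneg (mul_nonneg hs₂ ht₂) hc, sq_nonneg s₂]
  have hst : s₁ * t₂ ≤ 1 := mul_le_one₀ hs₁le ht₂ ht₂le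
  have h5 : t₁ * s₂ = 0 := le_antisymm (by linarith) (mul_nonneg ht₁ hs₂)
  have h6 : s₁ * t₂ = 1 := by linarith
  have hge : 1 ≤ s₁ := by
    have := mul_le_mul_of_nonneg_left ht₂le hs₁
    rw [mul_one] at this
    linarith
  have hs₁1 : s₁ = 1 := le_antisymm hs₁le hge
  refine ⟨hs₁1, ?_⟩
  have ht₁sq : t₁^2 ≤ 0 := by nlinarith [mul_nonneg ht₁ hc]
  have : t₁^2 = 0 := le_antisymm ht₁sq (sq_nonneg t₁)
  exact pow_eq_zero_iff (n := 2) (by norm_num) |>.mp this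

set_option maxHeartbeats 1000000 in
lemma wedge_unique (ω : ℝ) (hω₀ : 0 < ω) (hωπ2 : ω ≤ Real.pi/2)
    (v u w d : Plane) (huv : u - v ≠ 0) (hwv : w - v ≠ 0)
    (hor : ‖w - v‖⁻¹ • (w - v) = rot ω (‖u - v‖⁻¹ • (u - v)))
    (hd : ‖d‖ = 1) (hu : u ∈ wedge ω v d) (hw : w ∈ wedge ω v d) :
    d = ‖u - v‖⁻¹ • (u - v) := by
  have hπ : ω < Real.pi := lt_of_le_of_lt hωπ2 (by linarith [Real.pi_pos])
  have hsin : 0 < Real.sin ω := Real.sin_pos_of_pos_of_lt_pi hω₀ hπ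
  have hcos : 0 ≤ Real.cos ω := Real.cos_nonneg_of_mem_Icc ⟨by linarith, hωπ2⟩
  have hpy := Real.sin_sq_add_cos_sq ω
  set a : Plane := ‖u - v‖⁻¹ • (u - v) with hadef
  set b : Plane := ‖w - v‖⁻¹ • (w - v) with hbdef
  have hna : ‖a‖ = 1 := norm_smul_inv_norm huv
  have hnb : ‖b‖ = 1 := norm_smul_inv_norm hwv
  have ha2 : a 0^2 + a 1^2 = 1 := by rw [← norm_sq_coords, hna]; norm_num
  have hb2 : b 0^2 + b 1^2 = 1 := by rw [← norm_sq_coords, hnb]; norm_num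
  have hd2 : d 0^2 + d 1^2 = 1 := by rw [← norm_sq_coords, hd]; norm_num
  have hnuv : 0 < ‖u - v‖ := norm_pos_iff.mpr huv
  have hnwv : 0 < ‖w - v‖ := norm_pos_iff.mpr hwv
  have ha0' : a 0 = ‖u - v‖⁻¹ * (u - v) 0 := by rw [hadef]; rfl
  have ha1' : a 1 = ‖u - v‖⁻¹ * (u - v) 1 := by rw [hadef]; rfl
  have hb0' : b 0 = ‖w - v‖⁻¹ * (w - v) 0 := by rw [hbdef]; rfl
  have hb1' : b 1 = ‖w - v‖⁻¹ * (w - v) 1 := by rw [hbdef]; rfl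
  set e : Plane := rot ω d with hedef
  have he0 : e 0 = Real.cos ω * d 0 - Real.sin ω * d 1 := by rw [hedef, rot_apply0]
  have he1 : e 1 = Real.sin ω * d 0 + Real.cos ω * d 1 := by rw [hedef, rot_apply1]
  obtain ⟨s, t, hs, ht, hueq⟩ := hu
  obtain ⟨s', t', hs', ht', hweq⟩ := hw
  set n₁ : ℝ := ‖u - v‖ with hn₁def
  set n₂ : ℝ := ‖w - v‖ with hn₂def
  clear_value n₁ n₂
  set s₁ : ℝ := n₁⁻¹ * s with hs₁def
  set t₁ : ℝ := n₁⁻¹ * t with ht₁def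
  set s₂ : ℝ := n₂⁻¹ * s' with hs₂def
  set t₂ : ℝ := n₂⁻¹ * t' with ht₂def
  have hs₁ : 0 ≤ s₁ := mul_nonneg (by positivity) hs
  have ht₁ : 0 ≤ t₁ := mul_nonneg (by positivity) ht
  have hs₂ : 0 ≤ s₂ := mul_nonneg (by positivity) hs'
  have ht₂ : 0 ≤ t₂ := mul_nonneg (by positivity) ht'
  clear_value s₁ t₁ s₂ t₂
  have huv' : u - v = s • d + t • e := by rw [hueq, hedef]; abel
  have hwv' : w - v = s' • d + t' • e := by rw [hweq, hedef]; abel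
  clear_value e
  have ea0 : a 0 = s₁ * d 0 + t₁ * e 0 := by
    rw [ha0', huv', padd_apply, psmul_apply, psmul_apply, hs₁def, ht₁def]; ring
  have ea1 : a 1 = s₁ * d 1 + t₁ * e 1 := by
    rw [ha1', huv', padd_apply, psmul_apply, psmul_apply, hs₁def, ht₁def]; ring
  have eb0 : b 0 = s₂ * d 0 + t₂ * e 0 := by
    rw [hb0', hwv', padd_apply, psmul_apply, psmul_apply, hs₂def, ht₂def]; ring
  have eb1 : b 1 = s₂ * d 1 + t₂ * e 1 := by
    rw [hb1', hwv', padd_apply, psmul_apply, psmul_apply, hs₂def, ht₂def]; ring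
  -- norm equations
  have h1 : s₁^2 + t₁^2 + 2*s₁*t₁*Real.cos ω = 1 := by
    have ha2' := ha2
    rw [ea0, ea1, he0, he1] at ha2'
    linear_combination ha2' - (s₁^2 + 2*s₁*t₁*Real.cos ω +
      t₁^2*(Real.sin ω^2 + Real.cos ω^2)) * hd2 - t₁^2 * hpy
  have h2 : s₂^2 + t₂^2 + 2*s₂*t₂*Real.cos ω = 1 := by
    have hb2' := hb2
    rw [eb0, eb1, he0, he1] at hb2'
    linear_combination hb2' - (s₂^2 + 2*s₂*t₂*Real.cos ω +
      t₂^2*(Real.sin ω^2 + Real.cos ω^2)) * hd2 - t₂^2 * hpy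
  -- determinant equation
  have hab : cross a b = Real.sin ω := by
    rw [hor, cross_rot_self, hna]; norm_num
  have hde : d 0 * e 1 - d 1 * e 0 = Real.sin ω := by
    rw [he0, he1]; linear_combination Real.sin ω * hd2
  have habc : cross a b = (s₁*t₂ - t₁*s₂) * (d 0 * e 1 - d 1 * e 0) := by
    simp only [cross, ea0, ea1, eb0, eb1]; ring
  have h4 : s₁*t₂ - t₁*s₂ = 1 := by
    rw [hab, hde] at habc
    have hz : (s₁*t₂ - t₁*s₂ - 1) * Real.sin ω = 0 := by linear_combination (-1 : ℝ) * habc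
    rcases mul_eq_zero.mp hz with h | h
    · linarith
    · exact absurd h hsin.ne'
  obtain ⟨hs₁1, ht₁0⟩ := cone_extreme hcos hs₁ ht₁ hs₂ ht₂ h1 h2 h4
  exact (plane_ext (by rw [ea0, hs₁1, ht₁0]; ring) (by rw [ea1, hs₁1, ht₁0]; ring)).symm
lemma smul_unit_eq (c : ℝ) (x : Plane) (hx : x ≠ 0) :
    (c * ‖x‖) • (‖x‖⁻¹ • x) = c • x := by
  rw [smul_smul, mul_assoc, mul_inv_cancel₀ (norm_ne_zero_iff.mpr hx), mul_one]

/-- at a vertex `v` of interior angle exactly `ω` there is exactly one `ω`-wedge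
with apex `v` containing `O`, namely the one whose arms contain the two edges incident to `v`. -/
theorem unique_wedge_at_exact_angle_vertex (ω : ℝ) (hω₀ : 0 < ω) (hω : ω ≤ Real.pi / 2)
    (O : ConvexPolygon) (v u w : Plane) (hu : O.Adj v u) (hw : O.Adj v w) (huw : u ≠ w)
    (hangle : ∠ u v w = ω) :
    (∃! d : Plane, ‖d‖ = 1 ∧ O.body ⊆ wedge ω v d) ∧
    (∀ d : Plane, ‖d‖ = 1 → O.body ⊆ wedge ω v d →
      (segment ℝ v u ⊆ arm1 v d ∧ segment ℝ v w ⊆ arm2 ω v d) ∨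
      (segment ℝ v w ⊆ arm1 v d ∧ segment ℝ v u ⊆ arm2 ω v d)) := by
  have hπ : ω < Real.pi := lt_of_le_of_lt hω (by linarith [Real.pi_pos])
  have huvne : u - v ≠ 0 := sub_ne_zero_of_ne (hu.2.2.1).symm
  have hwvne : w - v ≠ 0 := sub_ne_zero_of_ne (hw.2.2.1).symm
  have hna : ‖‖u - v‖⁻¹ • (u - v)‖ = 1 := norm_smul_inv_norm huvne
  have hnb : ‖‖w - v‖⁻¹ • (w - v)‖ = 1 := norm_smul_inv_norm hwvne
  have hinner : (inner ℝ (‖u - v‖⁻¹ • (u - v)) (‖w - v‖⁻¹ • (w - v)) : ℝ) = Real.cos ω := by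
    have h1 : InnerProductGeometry.angle (u - v) (w - v) = ω := by
      rw [← hangle]
      simp [EuclideanGeometry.angle, vsub_eq_sub]
    have h2 := InnerProductGeometry.cos_angle (x := u - v) (y := w - v)
    rw [h1] at h2
    rw [real_inner_smul_left, real_inner_smul_right, h2]
    field_simp
  have hinner' : (inner ℝ (‖w - v‖⁻¹ • (w - v)) (‖u - v‖⁻¹ • (u - v)) : ℝ) = Real.cos ω := by
    rw [real_inner_comm]; exact hinner
  obtain hor | hor := rot_of_angle ω hω₀ hω hna hnb hinner
  · -- case: unit(w-v) = rot ω unit(u-v)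
    have hsub := body_subset_wedge ω hω₀ hπ O v u w hu hw hor
    have huniq : ∀ d : Plane, ‖d‖ = 1 → O.body ⊆ wedge ω v d →
        d = ‖u - v‖⁻¹ • (u - v) := fun d hd hsubd =>
      wedge_unique ω hω₀ hω v u w d huvne hwvne hor hd
        (hsubd (subset_convexHull ℝ _ hu.2.1)) (hsubd (subset_convexHull ℝ _ hw.2.1))
    refine ⟨⟨_, ⟨hna, hsub⟩, fun d hd => huniq d hd.1 hd.2⟩, ?_⟩
    intro d hd hsubd
    have hda := huniq d hd hsubd
    left
    constructor
    · intro x hx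
      rw [segment_eq_image'] at hx
      obtain ⟨θ, ⟨h0, h1⟩, hxeq⟩ := hx
      refine ⟨θ * ‖u - v‖, by positivity, ?_⟩
      rw [hda, smul_unit_eq _ _ huvne, ← hxeq]
    · intro x hx
      rw [segment_eq_image'] at hx
      obtain ⟨θ, ⟨h0, h1⟩, hxeq⟩ := hx
      refine ⟨θ * ‖w - v‖, by positivity, ?_⟩
      rw [hda, ← hor, smul_unit_eq _ _ hwvne, ← hxeq]
  · -- case: unit(u-v) = rot ω unit(w-v)
    have hsub := body_subset_wedge ω hω₀ hπ O v w u hw hu hor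
    have huniq : ∀ d : Plane, ‖d‖ = 1 → O.body ⊆ wedge ω v d →
        d = ‖w - v‖⁻¹ • (w - v) := fun d hd hsubd =>
      wedge_unique ω hω₀ hω v w u d hwvne huvne hor hd
        (hsubd (subset_convexHull ℝ _ hw.2.1)) (hsubd (subset_convexHull ℝ _ hu.2.1))
    refine ⟨⟨_, ⟨hnb, hsub⟩, fun d hd => huniq d hd.1 hd.2⟩, ?_⟩
    intro d hd hsubd
    have hda := huniq d hd hsubd
    right
    constructor
    · intro x hx
      rw [segment_eq_image'] at hx
      obtain ⟨θ, ⟨h0, h1⟩, hxeq⟩ := hx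
      refine ⟨θ * ‖w - v‖, by positivity, ?_⟩
      rw [hda, smul_unit_eq _ _ hwvne, ← hxeq]
    · intro x hx
      rw [segment_eq_image'] at hx
      obtain ⟨θ, ⟨h0, h1⟩, hxeq⟩ := hx
      refine ⟨θ * ‖u - v‖, by positivity, ?_⟩
      rw [hda, ← hor, smul_unit_eq _ _ huvne, ← hxeq]
end
end

section
/- Let ω satisfy 0 < ω ≤ π/2 and let O be a convex polygon with exactly 3 narrow vertices. Then every valid ω-probe of O touches a narrow vertex: for every valid ω-probe (q, d₁) of O, at least one narrow vertex of O lies on the union H₁ ∪ H₂ of the two arms of the probe. -/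
open Real EuclideanGeometry

noncomputable section

-- AUX START
def cx (p : Plane) : ℂ := ⟨p 0, p 1⟩
def icx (z : ℂ) : Plane := (WithLp.equiv 2 (Fin 2 → ℝ)).symm ![z.re, z.im]

@[simp] lemma cx_icx (z : ℂ) : cx (icx z) = z := by
  simp [cx, icx]

@[simp] lemma cx_re (p : Plane) : (cx p).re = p 0 := rfl
@[simp] lemma cx_im (p : Plane) : (cx p).im = p 1 := rfl

lemma cx_add (a b : Plane) : cx (a + b) = cx a + cx b := by
  apply Complex.ext <;> simp [cx]

lemma cx_sub (a b : Plane) : cx (a - b) = cx a - cx b := by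
  apply Complex.ext <;> simp [cx]

lemma cx_smul (c : ℝ) (a : Plane) : cx (c • a) = (c : ℂ) * cx a := by
  apply Complex.ext <;> simp [cx]

lemma cx_inj : Function.Injective cx := by
  intro a b h
  have h0 : a 0 = b 0 := congrArg Complex.re h
  have h1 : a 1 = b 1 := congrArg Complex.im h
  ext i
  fin_cases i <;> assumption

lemma inner_cx (a b : Plane) : (inner ℝ a b : ℝ) = (cx a * (starRingEnd ℂ) (cx b)).re := by
  simp [PiLp.inner_apply, Fin.sum_univ_two, Complex.mul_re, cx]
  ring

lemma norm_cx (p : Plane) : ‖cx p‖ = ‖p‖ := by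
  rw [← Real.sqrt_sq (norm_nonneg p), ← real_inner_self_eq_norm_sq]
  rw [inner_cx, Complex.mul_conj]
  simp [Complex.norm_def]

lemma cx_rot (θ : ℝ) (d : Plane) : cx (rot θ d) = Complex.exp (θ * Complex.I) * cx d := by
  apply Complex.ext <;>
    simp [cx, rot, Complex.exp_mul_I, Complex.mul_re, Complex.mul_im,
      Complex.cos_ofReal_re, Complex.sin_ofReal_re] <;> ring



lemma rmc (a b : ℂ) : (a * (starRingEnd ℂ) b).re = a.re * b.re + a.im * b.im := by
  simp [Complex.mul_re]

lemma normsq_one {n : ℂ} (hn : ‖n‖ = 1) : n.re ^ 2 + n.im ^ 2 = 1 := by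
  have := Complex.sq_norm n
  rw [hn, Complex.normSq_apply] at this
  nlinarith

lemma body_le (O : ConvexPolygon) (n : ℂ) (M : ℝ)
    (h : ∀ x ∈ O.verts, (n * (starRingEnd ℂ) (cx x)).re ≤ M) :
    ∀ y ∈ O.body, (n * (starRingEnd ℂ) (cx y)).re ≤ M := by
  have hlin : IsLinearMap ℝ (fun y : Plane => (inner ℝ y (icx n) : ℝ)) :=
    ⟨fun a b => inner_add_left a b _, fun c a => real_inner_smul_left a _ c⟩
  have hconv : Convex ℝ {y : Plane | (inner ℝ y (icx n) : ℝ) ≤ M} :=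
    convex_halfSpace_le hlin M
  have key : ∀ y : Plane, (inner ℝ y (icx n) : ℝ) = (n * (starRingEnd ℂ) (cx y)).re := by
    intro y
    rw [inner_cx, cx_icx, rmc, rmc]; ring
  intro y hy
  have hsub : O.body ⊆ {y : Plane | (inner ℝ y (icx n) : ℝ) ≤ M} := by
    apply convexHull_min _ hconv
    intro x hx
    simp only [Set.mem_setOf_eq, key]
    exact h x hx
  have := hsub hy
  simp only [Set.mem_setOf_eq, key] at this
  exact this

lemma body_isClosed (O : ConvexPolygon) : IsClosed O.body :=
  (O.verts.finite_toSet).isClosed_convexHull ℝ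

lemma mem_frontier_of_max (O : ConvexPolygon) (n : ℂ) (hn : ‖n‖ = 1) (M : ℝ)
    (hmax : ∀ x ∈ O.verts, (n * (starRingEnd ℂ) (cx x)).re ≤ M)
    (z : Plane) (hz : z ∈ O.body) (hzM : (n * (starRingEnd ℂ) (cx z)).re = M) :
    z ∈ frontier O.body := by
  rw [(body_isClosed O).frontier_eq]
  refine ⟨hz, fun hint => ?_⟩
  rcases Metric.isOpen_iff.1 isOpen_interior z hint with ⟨ε, hε, hball⟩
  have hnorm : ‖icx n‖ = 1 := by rw [← norm_cx, cx_icx, hn]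
  have hmem : z + (ε/2) • icx n ∈ O.body := by
    apply interior_subset; apply hball
    have hd : dist (z + (ε/2) • icx n) z = ε/2 * ‖icx n‖ := by
      simp [dist_eq_norm, norm_smul, abs_of_pos hε]
    rw [Metric.mem_ball, hd, hnorm, mul_one]
    linarith
  have hle := body_le O n M hmax _ hmem
  rw [cx_add, cx_smul, cx_icx] at hle
  have h1 := normsq_one hn
  rw [rmc] at hle hzM
  simp only [Complex.add_re, Complex.add_im, Complex.mul_re, Complex.mul_im,
    Complex.ofReal_re, Complex.ofReal_im] at hle
  nlinarith

lemma adj_of_support (O : ConvexPolygon) (v u : Plane) (hv : v ∈ O.verts) (hu : u ∈ O.verts)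
    (hne : v ≠ u) (n : ℂ) (hn : ‖n‖ = 1)
    (hsup : ∀ x ∈ O.verts, (n * (starRingEnd ℂ) (cx x - cx v)).re ≤ 0)
    (hu0 : (n * (starRingEnd ℂ) (cx u - cx v)).re = 0) : O.Adj v u := by
  set M : ℝ := (n * (starRingEnd ℂ) (cx v)).re with hM
  have hexp : ∀ x : Plane, (n * (starRingEnd ℂ) (cx x - cx v)).re
      = (n * (starRingEnd ℂ) (cx x)).re - M := by
    intro x; rw [hM, rmc, rmc, rmc, Complex.sub_re, Complex.sub_im]; ring
  have hmax : ∀ x ∈ O.verts, (n * (starRingEnd ℂ) (cx x)).re ≤ M := by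
    intro x hx
    have := hsup x hx; rw [hexp x] at this; linarith
  have huM : (n * (starRingEnd ℂ) (cx u)).re = M := by
    have := hu0; rw [hexp u] at this; linarith
  refine ⟨hv, hu, hne, ?_⟩
  intro z hz
  rcases hz with ⟨a, b, ha, hb, hab, rfl⟩
  have hzb : a • v + b • u ∈ O.body :=
    (convex_convexHull ℝ ((O.verts : Set Plane)))
      (subset_convexHull ℝ _ hv) (subset_convexHull ℝ _ hu) ha hb hab
  apply mem_frontier_of_max O n hn M hmax _ hzb
  rw [cx_add, cx_smul, cx_smul, rmc]
  rw [rmc] at huM hM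
  simp only [Complex.add_re, Complex.add_im, Complex.mul_re, Complex.mul_im,
    Complex.ofReal_re, Complex.ofReal_im]
  linear_combination a * hM.symm + b * huM + M * hab

lemma exists_sep (O : ConvexPolygon) (v : Plane) (hv : v ∈ O.verts) :
    ∃ g : Plane, ‖g‖ = 1 ∧ ∀ x ∈ O.verts, x ≠ v → (inner ℝ g (x - v) : ℝ) < 0 := by
  have hvnot := O.strictConvexPos v hv
  have hfin : ((O.verts : Set Plane) \ {v}).Finite := O.verts.finite_toSet.diff
  obtain ⟨f, u, hfu, huf⟩ := geometric_hahn_banach_closed_point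
    (convex_convexHull ℝ _) (hfin.isClosed_convexHull ℝ) hvnot
  set g0 : Plane := (InnerProductSpace.toDual ℝ Plane).symm f with hg0
  have hg0app : ∀ y : Plane, (inner ℝ g0 y : ℝ) = f y := by
    intro y; simp [hg0]
  -- there is some other vertex
  obtain ⟨x0, hx0, hx0v⟩ : ∃ x0 ∈ O.verts, x0 ≠ v := by
    by_contra hcon
    push_neg at hcon
    have : O.verts ⊆ {v} := fun x hx => by simp [hcon x hx]
    have h1 := Finset.card_le_card this
    have h3 := O.three_le_card
    simp at h1
    omega
  have hx0s : x0 ∈ convexHull ℝ ((O.verts : Set Plane) \ {v}) :=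
    subset_convexHull ℝ _ ⟨hx0, hx0v⟩
  have hfx0 : f x0 < f v := lt_trans (hfu _ hx0s) huf
  have hg0ne : g0 ≠ 0 := by
    intro h
    have : f x0 = f v := by
      rw [← hg0app, ← hg0app, h]; simp
    linarith
  refine ⟨‖g0‖⁻¹ • g0, ?_, ?_⟩
  · rw [norm_smul]
    simp [norm_inv, inv_mul_cancel₀ (norm_ne_zero_iff.2 hg0ne)]
  · intro x hx hxv
    have hxs : x ∈ convexHull ℝ ((O.verts : Set Plane) \ {v}) :=
      subset_convexHull ℝ _ ⟨hx, hxv⟩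
    have hfx : f x < f v := lt_trans (hfu _ hxs) huf
    rw [real_inner_smul_left]
    have : (inner ℝ g0 (x - v) : ℝ) < 0 := by
      rw [inner_sub_right, hg0app, hg0app]; linarith
    have hpos : (0:ℝ) < ‖g0‖⁻¹ := inv_pos.2 (norm_pos_iff.2 hg0ne)
    nlinarith


lemma re_exp_mul_conj (θ r t : ℝ) :
    (Complex.exp ((θ:ℂ) * Complex.I) *
      (starRingEnd ℂ) (((r:ℝ):ℂ) * Complex.exp (((t:ℝ):ℂ) * Complex.I))).re
      = r * Real.cos (θ - t) := by
  have h1 : (starRingEnd ℂ) (((r:ℝ):ℂ) * Complex.exp (((t:ℝ):ℂ) * Complex.I))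
      = ((r:ℝ):ℂ) * Complex.exp ((((-t:ℝ)):ℂ) * Complex.I) := by
    rw [map_mul, Complex.conj_ofReal, ← Complex.exp_conj]
    congr 2
    simp
  rw [h1, mul_comm (((r:ℝ):ℂ)) _, ← mul_assoc, ← Complex.exp_add]
  have h2 : (θ:ℂ) * Complex.I + ((-t:ℝ):ℂ) * Complex.I = (((θ - t : ℝ)):ℂ) * Complex.I := by
    push_cast; ring
  rw [h2, Complex.mul_re]
  simp only [Complex.exp_ofReal_mul_I_re, Complex.ofReal_re, Complex.ofReal_im, mul_zero, sub_zero]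
  ring

lemma re_polar_mul_conj (r1 t1 r2 t2 : ℝ) :
    ((((r1:ℝ):ℂ) * Complex.exp (((t1:ℝ):ℂ) * Complex.I)) *
      (starRingEnd ℂ) (((r2:ℝ):ℂ) * Complex.exp (((t2:ℝ):ℂ) * Complex.I))).re
      = r1 * (r2 * Real.cos (t1 - t2)) := by
  rw [mul_assoc, Complex.re_ofReal_mul, re_exp_mul_conj]

lemma narrow_arc (ω : ℝ) (hω₀ : 0 < ω) (hω : ω ≤ Real.pi / 2) (O : ConvexPolygon)
    (v : Plane) (hv : O.IsNarrow ω v) :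
    ∃ l L : ℝ, Real.pi - ω ≤ L ∧
      (∀ φ : ℝ, l ≤ φ → φ ≤ l + L → ∀ x ∈ O.verts, x ≠ v →
        (Complex.exp ((φ:ℂ) * Complex.I) * (starRingEnd ℂ) (cx x - cx v)).re ≤ 0) ∧
      (∀ φ : ℝ, l < φ → φ < l + L → ∀ x ∈ O.verts, x ≠ v →
        (Complex.exp ((φ:ℂ) * Complex.I) * (starRingEnd ℂ) (cx x - cx v)).re < 0) := by
  classical
  obtain ⟨hvm, hvang⟩ := hv
  obtain ⟨g, hg1, hgsep⟩ := exists_sep O v hvm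
  set G : ℂ := cx g with hG
  have hmGabs : ‖-G‖ = 1 := by
    rw [norm_neg, hG, norm_cx, hg1]
  set gv : ℝ := Complex.arg (-G) with hgv
  have hexpgv : Complex.exp ((gv:ℂ) * Complex.I) = -G := by
    have h := Complex.norm_mul_exp_arg_mul_I (-G)
    rwa [hmGabs, Complex.ofReal_one, one_mul] at h
  set Sv : Finset Plane := O.verts.erase v with hSv
  have hSvsub : ∀ x ∈ Sv, x ∈ O.verts ∧ x ≠ v := fun x hx =>
    ⟨Finset.mem_of_mem_erase hx, Finset.ne_of_mem_erase hx⟩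
  have hSvcard : 2 ≤ Sv.card := by
    have h3 := O.three_le_card
    rw [hSv, Finset.card_erase_of_mem hvm]
    omega
  have hSne : Sv.Nonempty := Finset.card_pos.1 (by omega)
  set ψ : Plane → ℝ := fun x => Complex.arg ((cx x - cx v) * (starRingEnd ℂ) (-G)) with hψ
  have hrepos : ∀ x ∈ Sv, 0 < ((cx x - cx v) * (starRingEnd ℂ) (-G)).re := by
    intro x hx
    obtain ⟨hx1, hx2⟩ := hSvsub x hx
    have hlt := hgsep x hx1 hx2
    rw [inner_cx] at hlt
    have e1 : ((cx x - cx v) * (starRingEnd ℂ) (-G)).re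
        = -((cx g * (starRingEnd ℂ) (cx (x - v))).re) := by
      rw [cx_sub, map_neg, mul_neg, Complex.neg_re, rmc, rmc, hG]
      ring
    rw [e1]; linarith
  have hpolar : ∀ x ∈ Sv, cx x - cx v
      = (((‖cx x - cx v‖ : ℝ)):ℂ) *
        Complex.exp ((((gv + ψ x : ℝ)):ℂ) * Complex.I) := by
    intro x hx
    have hre := hrepos x hx
    have hwne : (cx x - cx v) * (starRingEnd ℂ) (-G) ≠ 0 := by
      intro h; rw [h] at hre; simp at hre
    have habs : ‖(cx x - cx v) * (starRingEnd ℂ) (-G)‖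
        = ‖cx x - cx v‖ := by
      rw [norm_mul, Complex.norm_conj, hmGabs, mul_one]
    have hp := Complex.norm_mul_exp_arg_mul_I ((cx x - cx v) * (starRingEnd ℂ) (-G))
    have hrec : cx x - cx v = ((cx x - cx v) * (starRingEnd ℂ) (-G)) * (-G) := by
      rw [mul_assoc]
      have h2 : (starRingEnd ℂ) (-G) * (-G) = ((Complex.normSq (-G) : ℝ) : ℂ) := by
        rw [mul_comm, Complex.mul_conj]
      rw [h2]
      have : Complex.normSq (-G) = 1 := by
        rw [← Complex.sq_norm, hmGabs]; norm_num
      rw [this]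
      norm_num
    calc cx x - cx v = ((cx x - cx v) * (starRingEnd ℂ) (-G)) * (-G) := hrec
      _ = ((‖(cx x - cx v) * (starRingEnd ℂ) (-G)‖ : ℝ) : ℂ)
            * Complex.exp ((ψ x : ℂ) * Complex.I) * (-G) := by rw [hp]
      _ = (((‖cx x - cx v‖ : ℝ)):ℂ) *
            (Complex.exp ((ψ x : ℂ) * Complex.I) * Complex.exp ((gv:ℂ) * Complex.I)) := by
          rw [habs, hexpgv, mul_assoc]
      _ = (((‖cx x - cx v‖ : ℝ)):ℂ) *
            Complex.exp ((((gv + ψ x : ℝ)):ℂ) * Complex.I) := by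
          rw [← Complex.exp_add]
          congr 2
          push_cast; ring
  have hψlt : ∀ x ∈ Sv, |ψ x| < Real.pi/2 := by
    intro x hx
    exact Complex.abs_arg_lt_pi_div_two_iff.2 (Or.inl (hrepos x hx))
  obtain ⟨u, huS, humin⟩ := Finset.exists_min_image Sv ψ hSne
  obtain ⟨w, hwS, hwmax⟩ := Finset.exists_max_image Sv ψ hSne
  set α : ℝ := ψ u with hα
  set β : ℝ := ψ w with hβ
  have hβαlt : β - α < Real.pi := by
    have h1 := hψlt u huS
    have h2 := hψlt w hwS
    rw [abs_lt] at h1 h2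
    rw [hα, hβ]; cases h1; cases h2; linarith
  -- ray injectivity
  have hray : ∀ x ∈ Sv, ∀ y ∈ Sv,
      ‖cx x - cx v‖ < ‖cx y - cx v‖ → ψ x = ψ y → False := by
    intro x hx y hy hlt heq
    obtain ⟨hx1, hx2⟩ := hSvsub x hx
    obtain ⟨hy1, hy2⟩ := hSvsub y hy
    have hrypos : 0 < ‖cx y - cx v‖ :=
      lt_of_le_of_lt (norm_nonneg _) hlt
    have hxyne : x ≠ y := by
      intro h; rw [h] at hlt; exact lt_irrefl _ hlt
    set rx := ‖cx x - cx v‖ with hrx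
    set ry := ‖cx y - cx v‖ with hry
    have hplane : x - v = (rx/ry) • (y - v) := by
      apply cx_inj
      rw [cx_smul, cx_sub, cx_sub, hpolar x hx, hpolar y hy, heq]
      rw [← mul_assoc]
      congr 1
      rw [← Complex.ofReal_mul, div_mul_cancel₀ _ (ne_of_gt hrypos)]
    have hseg : x ∈ segment ℝ v y := by
      rw [segment_eq_image']
      refine ⟨rx/ry, ⟨div_nonneg (norm_nonneg _) (le_of_lt hrypos),
        le_of_lt ((div_lt_one hrypos).2 hlt)⟩, ?_⟩
      show v + (rx/ry) • (y - v) = x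
      rw [← hplane]
      abel
    have hsub2 : ({v, y} : Set Plane) ⊆ (O.verts : Set Plane) \ {x} := by
      intro p hp
      rcases hp with rfl | hp
      · exact ⟨hvm, by simp [Ne.symm hx2]⟩
      · rw [Set.mem_singleton_iff] at hp
        subst hp
        exact ⟨hy1, by simp [Ne.symm hxyne]⟩
    have : x ∈ convexHull ℝ ((O.verts : Set Plane) \ {x}) := by
      apply convexHull_mono hsub2
      rw [convexHull_pair]
      exact hseg
    exact O.strictConvexPos x hx1 this
  have hαβpos : 0 < β - α := by
    obtain ⟨x, hx, y, hy, hxy⟩ := Finset.one_lt_card.1 (lt_of_lt_of_le one_lt_two hSvcard)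
    have hne : ψ x ≠ ψ y := by
      intro heq
      rcases lt_trichotomy (‖cx x - cx v‖) (‖cx y - cx v‖) with h|h|h
      · exact hray x hx y hy h heq
      · apply hxy
        apply cx_inj
        have e1 := hpolar x hx
        have e2 := hpolar y hy
        rw [heq, h] at e1
        have : cx x - cx v = cx y - cx v := e1.trans e2.symm
        linear_combination this
      · exact hray y hy x hx h heq.symm
    have h1 : α ≤ ψ x := humin x hx
    have h2 : α ≤ ψ y := humin y hy
    have h3 : ψ x ≤ β := hwmax x hx
    have h4 : ψ y ≤ β := hwmax y hy
    rcases lt_or_eq_of_le (le_trans h1 h3) with h | h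
    · exact sub_pos.2 h
    · exfalso
      apply hne
      have : ψ x = β := le_antisymm h3 (by rw [← h]; exact h1)
      have h5 : ψ y = β := le_antisymm h4 (by rw [← h]; exact h2)
      rw [this, h5]
  have huw : u ≠ w := by
    intro h
    rw [hα, hβ, h] at hαβpos
    simp at hαβpos
  -- main computation
  have hcomp : ∀ (θ:ℝ), ∀ x ∈ Sv,
      (Complex.exp ((θ:ℂ) * Complex.I) * (starRingEnd ℂ) (cx x - cx v)).re
        = ‖cx x - cx v‖ * Real.cos (θ - (gv + ψ x)) := by
    intro θ x hx
    conv_lhs => rw [hpolar x hx]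
    rw [re_exp_mul_conj]
  -- adjacency for u
  have hadju : O.Adj v u := by
    apply adj_of_support O v u hvm (hSvsub u huS).1 (Ne.symm (hSvsub u huS).2)
      (Complex.exp (((gv + α - Real.pi/2 : ℝ):ℂ) * Complex.I))
      (Complex.norm_exp_ofReal_mul_I _)
    · intro x hx
      by_cases hxv : x = v
      · subst hxv; simp
      · have hxS : x ∈ Sv := Finset.mem_erase.2 ⟨hxv, hx⟩
        rw [hcomp _ x hxS]
        have hc : Real.cos ((gv + α - Real.pi/2) - (gv + ψ x)) ≤ 0 := by
          rw [← Real.cos_neg]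
          apply Real.cos_nonpos_of_pi_div_two_le_of_le
          · have := humin x hxS; linarith
          · have := hwmax x hxS; linarith
        exact mul_nonpos_iff.2 (Or.inl ⟨norm_nonneg _, hc⟩)
    · rw [hcomp _ u huS]
      have : (gv + α - Real.pi/2) - (gv + α) = -(Real.pi/2) := by ring
      rw [this, Real.cos_neg, Real.cos_pi_div_two, mul_zero]
  -- adjacency for w
  have hadjw : O.Adj v w := by
    apply adj_of_support O v w hvm (hSvsub w hwS).1 (Ne.symm (hSvsub w hwS).2)
      (Complex.exp (((gv + β + Real.pi/2 : ℝ):ℂ) * Complex.I))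
      (Complex.norm_exp_ofReal_mul_I _)
    · intro x hx
      by_cases hxv : x = v
      · subst hxv; simp
      · have hxS : x ∈ Sv := Finset.mem_erase.2 ⟨hxv, hx⟩
        rw [hcomp _ x hxS]
        have hc : Real.cos ((gv + β + Real.pi/2) - (gv + ψ x)) ≤ 0 := by
          apply Real.cos_nonpos_of_pi_div_two_le_of_le
          · have := hwmax x hxS; linarith
          · have := humin x hxS; linarith
        exact mul_nonpos_iff.2 (Or.inl ⟨norm_nonneg _, hc⟩)
    · rw [hcomp _ w hwS]
      have : (gv + β + Real.pi/2) - (gv + β) = Real.pi/2 := by ring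
      rw [this, Real.cos_pi_div_two, mul_zero]
  -- the angle
  have hune : cx u - cx v ≠ 0 := by
    intro h
    exact (hSvsub u huS).2 (cx_inj (by linear_combination h))
  have hwne : cx w - cx v ≠ 0 := by
    intro h
    exact (hSvsub w hwS).2 (cx_inj (by linear_combination h))
  have hrupos : 0 < ‖cx u - cx v‖ := norm_pos_iff.2 hune
  have hrwpos : 0 < ‖cx w - cx v‖ := norm_pos_iff.2 hwne
  have hangle : EuclideanGeometry.angle u v w = β - α := by
    have hinner : (inner ℝ (u - v) (w - v) : ℝ)
        = ‖cx u - cx v‖ * (‖cx w - cx v‖ * Real.cos (β - α)) := by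
      rw [inner_cx, cx_sub, cx_sub]
      conv_lhs => rw [hpolar u huS, hpolar w hwS]
      rw [re_polar_mul_conj]
      have : (gv + α) - (gv + β) = -(β - α) := by ring
      rw [this, Real.cos_neg]
    have hnu : ‖u - v‖ = ‖cx u - cx v‖ := by rw [← norm_cx, cx_sub]
    have hnw : ‖w - v‖ = ‖cx w - cx v‖ := by rw [← norm_cx, cx_sub]
    show InnerProductGeometry.angle (u -ᵥ v) (w -ᵥ v) = β - α
    rw [InnerProductGeometry.angle]
    have hsub1 : u -ᵥ v = u - v := rfl
    have hsub2 : w -ᵥ v = w - v := rfl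
    rw [hsub1, hsub2, hinner, hnu, hnw]
    have hval : ‖cx u - cx v‖ * (‖cx w - cx v‖ * Real.cos (β - α)) /
        (‖cx u - cx v‖ * ‖cx w - cx v‖) = Real.cos (β - α) := by
      rw [div_eq_iff (by positivity)]
      ring
    rw [hval]
    exact Real.arccos_cos (by linarith) (by linarith)
  -- conclude β - α ≤ ω
  have hbdd : BddAbove {θ : ℝ | ∃ u' w', O.Adj v u' ∧ O.Adj v w' ∧ u' ≠ w' ∧ θ = ∠ u' v w'} := by
    refine ⟨Real.pi, fun θ hθ => ?_⟩
    obtain ⟨a, b, _, _, _, rfl⟩ := hθ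
    exact EuclideanGeometry.angle_le_pi _ _ _
  have hmemset : (β - α) ∈ {θ : ℝ | ∃ u' w', O.Adj v u' ∧ O.Adj v w' ∧ u' ≠ w' ∧ θ = ∠ u' v w'} :=
    ⟨u, w, hadju, hadjw, huw, hangle.symm⟩
  have hint : β - α ≤ O.intAngle v := le_csSup hbdd hmemset
  have hβαω : β - α ≤ ω := le_trans hint hvang
  -- final output
  refine ⟨gv + β + Real.pi/2, Real.pi - (β - α), by linarith, ?_, ?_⟩
  · intro φ h1 h2 x hx hxv
    have hxS : x ∈ Sv := Finset.mem_erase.2 ⟨hxv, hx⟩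
    rw [hcomp φ x hxS]
    have hc : Real.cos (φ - (gv + ψ x)) ≤ 0 := by
      apply Real.cos_nonpos_of_pi_div_two_le_of_le
      · have := hwmax x hxS; linarith
      · have := humin x hxS; linarith
    exact mul_nonpos_iff.2 (Or.inl ⟨norm_nonneg _, hc⟩)
  · intro φ h1 h2 x hx hxv
    have hxS : x ∈ Sv := Finset.mem_erase.2 ⟨hxv, hx⟩
    rw [hcomp φ x hxS]
    have hc : Real.cos (φ - (gv + ψ x)) < 0 := by
      apply Real.cos_neg_of_pi_div_two_lt_of_lt
      · have := hwmax x hxS; linarith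
      · have := humin x hxS; linarith
    have hxne : cx x - cx v ≠ 0 := by
      intro h
      exact hxv (cx_inj (by linear_combination h))
    exact mul_neg_of_pos_of_neg (norm_pos_iff.2 hxne) hc


lemma re_conj_smul (n : ℂ) (t : ℝ) (z : ℂ) :
    (n * (starRingEnd ℂ) (((t:ℝ):ℂ) * z)).re = t * (n * (starRingEnd ℂ) z).re := by
  rw [map_mul, Complex.conj_ofReal,
    show n * (((t:ℝ):ℂ) * (starRingEnd ℂ) z) = ((t:ℝ):ℂ) * (n * (starRingEnd ℂ) z) by ring,
    Complex.re_ofReal_mul]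

lemma touch_arm1 (ω : ℝ) (hω₀ : 0 < ω) (hωπ : ω < Real.pi) (O : ConvexPolygon) (q d : Plane)
    (hpr : IsValidProbe ω O q d) (v : Plane) (hv : v ∈ O.verts)
    (hsup : ∀ x ∈ O.verts, ((-Complex.I * cx d) * (starRingEnd ℂ) (cx x - cx v)).re ≤ 0) :
    v ∈ arm1 q d := by
  obtain ⟨hd, hbody, ⟨p, hparm, hpbody⟩, -⟩ := hpr
  set N := -Complex.I * cx d with hN
  set M := (N * (starRingEnd ℂ) (cx v)).re with hM
  have habsD : ‖cx d‖ = 1 := by rw [norm_cx, hd]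
  have hnormsq1 : (cx d).re^2 + (cx d).im^2 = 1 := normsq_one habsD
  have hshift : ∀ x : Plane, (N * (starRingEnd ℂ) (cx x - cx v)).re
      = (N * (starRingEnd ℂ) (cx x)).re - M := by
    intro x; rw [hM, rmc, rmc, rmc, Complex.sub_re, Complex.sub_im]; ring
  have hmax : ∀ x ∈ O.verts, (N * (starRingEnd ℂ) (cx x)).re ≤ M := by
    intro x hx; have := hsup x hx; rw [hshift x] at this; linarith
  have hble := body_le O N M hmax
  have hD1 : (N * (starRingEnd ℂ) (cx d)).re = 0 := by
    have h : (N * (starRingEnd ℂ) (cx d)).re = 0 * ((cx d).re^2 + (cx d).im^2) := by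
      simp only [hN, Complex.mul_re, Complex.mul_im, Complex.conj_re, Complex.conj_im,
        Complex.neg_re, Complex.neg_im, Complex.I_re, Complex.I_im]
      ring
    rw [h]; ring
  have hD2 : (N * (starRingEnd ℂ) (Complex.exp (((ω:ℝ):ℂ) * Complex.I) * cx d)).re
      = -Real.sin ω := by
    have h : (N * (starRingEnd ℂ) (Complex.exp (((ω:ℝ):ℂ) * Complex.I) * cx d)).re
        = -Real.sin ω * ((cx d).re^2 + (cx d).im^2) := by
      simp only [hN, map_mul, Complex.mul_re, Complex.mul_im, Complex.conj_re, Complex.conj_im,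
        Complex.neg_re, Complex.neg_im, Complex.I_re, Complex.I_im,
        Complex.exp_ofReal_mul_I_re, Complex.exp_ofReal_mul_I_im]
      ring
    rw [h, hnormsq1]; ring
  obtain ⟨t0, ht0, rfl⟩ := hparm
  have hparm_val : (N * (starRingEnd ℂ) (cx (q + t0 • d))).re
      = (N * (starRingEnd ℂ) (cx q)).re := by
    rw [cx_add, cx_smul, map_add, mul_add, Complex.add_re, re_conj_smul, hD1]; ring
  have hq_le : (N * (starRingEnd ℂ) (cx q)).re ≤ M := by
    rw [← hparm_val]; exact hble _ hpbody
  obtain ⟨s, t, hs, ht, hveq⟩ := hbody (subset_convexHull ℝ _ hv)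
  have hveqc : cx v = cx q + ((s:ℝ):ℂ) * cx d
      + ((t:ℝ):ℂ) * (Complex.exp (((ω:ℝ):ℂ) * Complex.I) * cx d) := by
    rw [hveq, cx_add, cx_add, cx_smul, cx_smul, cx_rot]
  have hMval : M = (N * (starRingEnd ℂ) (cx q)).re + t * (-Real.sin ω) := by
    rw [hM, hveqc, map_add, map_add, mul_add, mul_add, Complex.add_re, Complex.add_re,
      re_conj_smul, re_conj_smul, hD1, hD2]; ring
  have hsin : 0 < Real.sin ω := Real.sin_pos_of_pos_of_lt_pi hω₀ hωπ
  have ht0' : t = 0 := by nlinarith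
  refine ⟨s, hs, ?_⟩
  rw [hveq, ht0', zero_smul, add_zero]

lemma touch_arm2 (ω : ℝ) (hω₀ : 0 < ω) (hωπ : ω < Real.pi) (O : ConvexPolygon) (q d : Plane)
    (hpr : IsValidProbe ω O q d) (v : Plane) (hv : v ∈ O.verts)
    (hsup : ∀ x ∈ O.verts,
      ((Complex.I * (Complex.exp (((ω:ℝ):ℂ) * Complex.I) * cx d)) *
        (starRingEnd ℂ) (cx x - cx v)).re ≤ 0) :
    v ∈ arm2 ω q d := by
  obtain ⟨hd, hbody, -, ⟨p, hparm, hpbody⟩⟩ := hpr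
  set N := Complex.I * (Complex.exp (((ω:ℝ):ℂ) * Complex.I) * cx d) with hN
  set M := (N * (starRingEnd ℂ) (cx v)).re with hM
  have habsD : ‖cx d‖ = 1 := by rw [norm_cx, hd]
  have hnormsq1 : (cx d).re^2 + (cx d).im^2 = 1 := normsq_one habsD
  have hshift : ∀ x : Plane, (N * (starRingEnd ℂ) (cx x - cx v)).re
      = (N * (starRingEnd ℂ) (cx x)).re - M := by
    intro x; rw [hM, rmc, rmc, rmc, Complex.sub_re, Complex.sub_im]; ring
  have hmax : ∀ x ∈ O.verts, (N * (starRingEnd ℂ) (cx x)).re ≤ M := by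
    intro x hx; have := hsup x hx; rw [hshift x] at this; linarith
  have hble := body_le O N M hmax
  have hsc : Real.cos ω ^ 2 + Real.sin ω ^ 2 = 1 := by
    rw [add_comm]; exact Real.sin_sq_add_cos_sq ω
  have hD1 : (N * (starRingEnd ℂ) (Complex.exp (((ω:ℝ):ℂ) * Complex.I) * cx d)).re = 0 := by
    have h : (N * (starRingEnd ℂ) (Complex.exp (((ω:ℝ):ℂ) * Complex.I) * cx d)).re
        = 0 * (((cx d).re^2 + (cx d).im^2) * (Real.cos ω ^ 2 + Real.sin ω ^ 2)) := by
      simp only [hN, map_mul, Complex.mul_re, Complex.mul_im, Complex.conj_re, Complex.conj_im,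
        Complex.I_re, Complex.I_im, Complex.exp_ofReal_mul_I_re, Complex.exp_ofReal_mul_I_im]
      ring
    rw [h]; ring
  have hD2 : (N * (starRingEnd ℂ) (cx d)).re = -Real.sin ω := by
    have h : (N * (starRingEnd ℂ) (cx d)).re
        = -Real.sin ω * ((cx d).re^2 + (cx d).im^2) := by
      simp only [hN, map_mul, Complex.mul_re, Complex.mul_im, Complex.conj_re, Complex.conj_im,
        Complex.I_re, Complex.I_im, Complex.exp_ofReal_mul_I_re, Complex.exp_ofReal_mul_I_im]
      ring
    rw [h, hnormsq1]; ring
  obtain ⟨t0, ht0, rfl⟩ := hparm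
  have hparm_val : (N * (starRingEnd ℂ) (cx (q + t0 • rot ω d))).re
      = (N * (starRingEnd ℂ) (cx q)).re := by
    rw [cx_add, cx_smul, cx_rot, map_add, mul_add, Complex.add_re, re_conj_smul, hD1]; ring
  have hq_le : (N * (starRingEnd ℂ) (cx q)).re ≤ M := by
    rw [← hparm_val]; exact hble _ hpbody
  obtain ⟨s, t, hs, ht, hveq⟩ := hbody (subset_convexHull ℝ _ hv)
  have hveqc : cx v = cx q + ((s:ℝ):ℂ) * cx d
      + ((t:ℝ):ℂ) * (Complex.exp (((ω:ℝ):ℂ) * Complex.I) * cx d) := by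
    rw [hveq, cx_add, cx_add, cx_smul, cx_smul, cx_rot]
  have hMval : M = (N * (starRingEnd ℂ) (cx q)).re + s * (-Real.sin ω) := by
    rw [hM, hveqc, map_add, map_add, mul_add, mul_add, Complex.add_re, Complex.add_re,
      re_conj_smul, re_conj_smul, hD1, hD2]; ring
  have hsin : 0 < Real.sin ω := Real.sin_pos_of_pos_of_lt_pi hω₀ hωπ
  have hs0 : s = 0 := by nlinarith
  refine ⟨t, ht, ?_⟩
  rw [hveq, hs0, zero_smul]
  abel


lemma exp_shift_int (φ : ℝ) (k : ℤ) :
    Complex.exp ((((φ - 2*Real.pi*k : ℝ)):ℂ) * Complex.I)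
      = Complex.exp (((φ:ℝ):ℂ) * Complex.I) := by
  have h : (((φ - 2*Real.pi*k : ℝ)):ℂ) * Complex.I
      = ((φ:ℝ):ℂ) * Complex.I + (-k : ℤ) * (2 * (Real.pi:ℂ) * Complex.I) := by
    push_cast; ring
  rw [h, Complex.exp_add, Complex.exp_int_mul_two_pi_mul_I, mul_one]

-- AUX END

/-- if `O` has exactly 3 narrow vertices, every valid `ω`-probe of `O` touches a
narrow vertex. -/
theorem every_probe_touches_narrow (ω : ℝ) (hω₀ : 0 < ω) (hω : ω ≤ Real.pi / 2)
    (O : ConvexPolygon) (h3 : {v | O.IsNarrow ω v}.ncard = 3) :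
    ∀ q d : Plane, IsValidProbe ω O q d →
      ∃ v, O.IsNarrow ω v ∧ v ∈ arm1 q d ∪ arm2 ω q d := by
  intro q d hpr
  by_contra hcon
  push_neg at hcon
  have hπ := Real.pi_pos
  have hωπ : ω < Real.pi := by linarith
  obtain ⟨a, b, c, hab, hac, hbc, hset⟩ := Set.ncard_eq_three.1 h3
  have hna : O.IsNarrow ω a := by
    have : a ∈ {v | O.IsNarrow ω v} := by rw [hset]; simp
    exact this
  have hnb : O.IsNarrow ω b := by
    have : b ∈ {v | O.IsNarrow ω v} := by rw [hset]; simp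
    exact this
  have hnc : O.IsNarrow ω c := by
    have : c ∈ {v | O.IsNarrow ω v} := by rw [hset]; simp
    exact this
  have habsD : ‖cx d‖ = 1 := by rw [norm_cx, hpr.1]
  set N1 : ℂ := -Complex.I * cx d with hN1
  have habsN1 : ‖N1‖ = 1 := by
    rw [hN1, norm_mul, habsD, mul_one, norm_neg, Complex.norm_I]
  set φ1 : ℝ := Complex.arg N1 with hφ1
  have hexpφ1 : Complex.exp (((φ1:ℝ):ℂ) * Complex.I) = N1 := by
    have h := Complex.norm_mul_exp_arg_mul_I N1
    rwa [habsN1, Complex.ofReal_one, one_mul] at h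
  set φ2 : ℝ := φ1 + Real.pi + ω with hφ2
  have hexpφ2 : Complex.exp (((φ2:ℝ):ℂ) * Complex.I)
      = Complex.I * (Complex.exp (((ω:ℝ):ℂ) * Complex.I) * cx d) := by
    have h : (((φ2:ℝ)):ℂ) * Complex.I
        = ((φ1:ℝ):ℂ) * Complex.I + (Real.pi:ℂ) * Complex.I + ((ω:ℝ):ℂ) * Complex.I := by
      rw [hφ2]; push_cast; ring
    rw [h, Complex.exp_add, Complex.exp_add, hexpφ1, Complex.exp_pi_mul_I, hN1]
    ring
  -- key construction for each narrow vertex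
  have key : ∀ v : Plane, O.IsNarrow ω v →
      ∃ l r : ℝ, Real.pi - ω ≤ r - l ∧ φ1 < l ∧ r < φ2 ∧
        (∀ φ : ℝ, l < φ → φ < r → ∀ x ∈ O.verts, x ≠ v →
          (Complex.exp ((φ:ℂ) * Complex.I) * (starRingEnd ℂ) (cx x - cx v)).re < 0) := by
    intro v hnv
    have hvarm := hcon v hnv
    obtain ⟨l0, L, hL, hP, hPs⟩ := narrow_arc ω hω₀ hω O v hnv
    set k : ℤ := ⌊(φ1 - l0)/(2*Real.pi)⌋ + 1 with hk
    set l : ℝ := l0 + 2*Real.pi*k with hl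
    set r : ℝ := l + L with hr
    have h2π : (0:ℝ) < 2*Real.pi := by linarith
    have hk1 : (φ1 - l0)/(2*Real.pi) < (k:ℝ) := by
      rw [hk]; push_cast
      exact Int.lt_floor_add_one _
    have hk2 : ((k:ℝ) - 1) ≤ (φ1 - l0)/(2*Real.pi) := by
      rw [hk]; push_cast
      simp only [add_sub_cancel_right]
      exact Int.floor_le _
    have hlgt : φ1 < l := by
      rw [hl]
      have := (div_lt_iff₀ h2π).1 hk1
      linarith
    have hlle : l ≤ φ1 + 2*Real.pi := by
      rw [hl]
      have h := (le_div_iff₀ h2π).1 hk2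
      nlinarith
    -- transported bounds
    have hPt : ∀ φ : ℝ, l ≤ φ → φ ≤ r → ∀ x ∈ O.verts, x ≠ v →
        (Complex.exp ((φ:ℂ) * Complex.I) * (starRingEnd ℂ) (cx x - cx v)).re ≤ 0 := by
      intro φ hφ1' hφ2' x hx hxv
      have := hP (φ - 2*Real.pi*k) (by rw [hl] at hφ1'; linarith)
        (by rw [hr, hl] at hφ2'; linarith) x hx hxv
      rwa [exp_shift_int] at this
    have hPts : ∀ φ : ℝ, l < φ → φ < r → ∀ x ∈ O.verts, x ≠ v →
        (Complex.exp ((φ:ℂ) * Complex.I) * (starRingEnd ℂ) (cx x - cx v)).re < 0 := by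
      intro φ hφ1' hφ2' x hx hxv
      have := hPs (φ - 2*Real.pi*k) (by rw [hl] at hφ1'; linarith)
        (by rw [hr, hl] at hφ2'; linarith) x hx hxv
      rwa [exp_shift_int] at this
    -- the arm1 angle is not in [l, r]
    have harm1 : ¬ (l ≤ φ1 + 2*Real.pi ∧ φ1 + 2*Real.pi ≤ r) := by
      rintro ⟨ha1, ha2⟩
      apply hvarm
      left
      apply touch_arm1 ω hω₀ hωπ O q d hpr v hnv.1
      intro x hx
      by_cases hxv : x = v
      · subst hxv; simp
      · have := hPt (φ1 + 2*Real.pi) ha1 ha2 x hx hxv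
        have he : Complex.exp ((((φ1 + 2*Real.pi:ℝ)):ℂ) * Complex.I) = N1 := by
          have h0 : (φ1 + 2*Real.pi : ℝ) = φ1 - 2*Real.pi*((-1 : ℤ):ℝ) := by push_cast; ring
          rw [h0, exp_shift_int, hexpφ1]
        rwa [he] at this
    have harm2 : ¬ (l ≤ φ2 ∧ φ2 ≤ r) := by
      rintro ⟨ha1, ha2⟩
      apply hvarm
      right
      apply touch_arm2 ω hω₀ hωπ O q d hpr v hnv.1
      intro x hx
      by_cases hxv : x = v
      · subst hxv; simp
      · have := hPt φ2 ha1 ha2 x hx hxv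
        rwa [hexpφ2] at this
    have hrlt : r < φ1 + 2*Real.pi := by
      by_contra hge
      push_neg at hge
      exact harm1 ⟨hlle, hge⟩
    have hφ2notin : φ2 < l ∨ r < φ2 := by
      by_contra hge
      push_neg at hge
      exact harm2 ⟨hge.1, hge.2⟩
    have hrl : Real.pi - ω ≤ r - l := by rw [hr]; linarith
    rcases hφ2notin with h | h
    · exfalso
      rw [hφ2] at h
      linarith
    · exact ⟨l, r, hrl, hlgt, h, hPts⟩
  obtain ⟨la, ra, hlen_a, hla, hra, hsa⟩ := key a hna
  obtain ⟨lb, rb, hlen_b, hlb, hrb, hsb⟩ := key b hnb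
  obtain ⟨lc, rc, hlen_c, hlc, hrc, hsc⟩ := key c hnc
  -- pairwise disjointness of open intervals
  have hdisj : ∀ (v1 v2 : Plane) (l1 r1 l2 r2 : ℝ), v1 ≠ v2 →
      v1 ∈ O.verts → v2 ∈ O.verts →
      (∀ φ : ℝ, l1 < φ → φ < r1 → ∀ x ∈ O.verts, x ≠ v1 →
        (Complex.exp ((φ:ℂ) * Complex.I) * (starRingEnd ℂ) (cx x - cx v1)).re < 0) →
      (∀ φ : ℝ, l2 < φ → φ < r2 → ∀ x ∈ O.verts, x ≠ v2 →
        (Complex.exp ((φ:ℂ) * Complex.I) * (starRingEnd ℂ) (cx x - cx v2)).re < 0) →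
      Real.pi - ω ≤ r1 - l1 → Real.pi - ω ≤ r2 - l2 →
      r1 ≤ l2 ∨ r2 ≤ l1 := by
    intro v1 v2 l1 r1 l2 r2 hne hv1 hv2 hs1 hs2 hlen1 hlen2
    by_contra h
    push_neg at h
    obtain ⟨h12, h21⟩ := h
    have hπω : 0 < Real.pi - ω := by linarith
    set A := max l1 l2 with hA
    set B := min r1 r2 with hB
    have hl1r1 : l1 < r1 := by linarith
    have hl2r2 : l2 < r2 := by linarith
    have hAB : A < B := by
      rw [hA, hB]
      apply max_lt <;> apply lt_min <;> linarith
    set φ := (A + B)/2 with hφ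
    have hb1 : l1 < φ ∧ φ < r1 := by
      constructor
      · have := le_max_left l1 l2; rw [hφ]; linarith
      · have := min_le_left r1 r2; rw [hφ]; linarith
    have hb2 : l2 < φ ∧ φ < r2 := by
      constructor
      · have := le_max_right l1 l2; rw [hφ]; linarith
      · have := min_le_right r1 r2; rw [hφ]; linarith
    have hx1 := hs1 φ hb1.1 hb1.2 v2 hv2 (Ne.symm hne)
    have hx2 := hs2 φ hb2.1 hb2.2 v1 hv1 hne
    have hopp : (Complex.exp ((φ:ℂ) * Complex.I) * (starRingEnd ℂ) (cx v1 - cx v2)).re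
        = -((Complex.exp ((φ:ℂ) * Complex.I) * (starRingEnd ℂ) (cx v2 - cx v1)).re) := by
      rw [show cx v1 - cx v2 = -(cx v2 - cx v1) by ring, map_neg, mul_neg, Complex.neg_re]
    rw [hopp] at hx2
    linarith
  have hab' := hdisj a b la ra lb rb hab hna.1 hnb.1 hsa hsb hlen_a hlen_b
  have hac' := hdisj a c la ra lc rc hac hna.1 hnc.1 hsa hsc hlen_a hlen_c
  have hbc' := hdisj b c lb rb lc rc hbc hnb.1 hnc.1 hsb hsc hlen_b hlen_c
  rw [hφ2] at hra hrb hrc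
  rcases hab' with h1 | h1 <;> rcases hac' with h2 | h2 <;> rcases hbc' with h3 | h3 <;>
    linarith

end
end
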